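/- Let q be a doubling weight function with doubling constant D, set w(t) = q(1/(1−t)) for t ∈ [1/2,1), let μ be the Lebesgue–Stieltjes measure on [1/2,1) associated with the increasing function t ↦ −1/w(t), and define f(α) = (∫_{[1/2,1)} t^α dμ(t))^{−1} for real α ≥ 1. Then there exists a constant A depending only on D such that A^{−1}·q(n) ≤ f(n) ≤ A·q(n) for all integers n ≥ 1. -/

import Mathlib

open MeasureTheory

/-- A doubling weight function with doubling constant `D`: a positive, increasing,
continuous function on `[1,∞)` with `q(1) = 1`, `q(x) → ∞`, and `q(2x) ≤ D·q(x)`. -/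
def IsDoublingWeight (q : ℝ → ℝ) (D : ℝ) : Prop :=
  ContinuousOn q (Set.Ici 1) ∧ MonotoneOn q (Set.Ici 1) ∧
  (∀ x : ℝ, 1 ≤ x → 0 < q x) ∧ q 1 = 1 ∧
  Filter.Tendsto q Filter.atTop Filter.atTop ∧
  (∀ x : ℝ, 1 ≤ x → q (2 * x) ≤ D * q x)

/-- `μ` is the Lebesgue–Stieltjes measure on `[1/2, 1)` of the increasing function
`t ↦ -1/w(t)`, where `w(t) = q(1/(1-t))`. -/
def IsRegularizationMeasure (q : ℝ → ℝ) (μ : Measure ℝ) : Prop :=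
  (∀ a b : ℝ, 1/2 ≤ a → a ≤ b → b < 1 →
    μ (Set.Ico a b) = ENNReal.ofReal (1 / q (1 / (1 - a)) - 1 / q (1 / (1 - b)))) ∧
  (∀ a : ℝ, 1/2 ≤ a → a < 1 →
    μ (Set.Ico a 1) = ENNReal.ofReal (1 / q (1 / (1 - a)))) ∧
  μ ((Set.Ico (1/2 : ℝ) 1)ᶜ) = 0

/-!
For the lower bound only the interval `[1 - 1/(2n), 1)` matters: there `t ^ n ≥ 1/2` by Bernoulli's
inequality, and its mass is `1/q(2n) ≥ 1/(D q(n))`.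

For the upper bound cut `[1/2, 1)` at the dyadic points `1 - 2⁻ᵏ`, `1 ≤ k ≤ K + 1`, where
`2 ^ K ≤ n < 2 ^ (K + 1)`. The tail `[1 - 2^-(K+1), 1)` has mass `1/q(2^(K+1)) ≤ 1/q(n)`. On the
piece starting at `1 - 2⁻ᵏ`, with `j = K - k`, we have `t ^ n ≤ exp(-2^j/2)`, while its mass is at
most `1/q(2^k) ≤ D^(j+1)/q(n)` by doubling. The doubly exponential decay beats `D^(j+1)`, so the
pieces add up to `C(D)/q(n)`.
-/

open Real Set

lemma summable_pow_mul_exp_neg_two_pow {D : ℝ} (hD : 0 ≤ D) :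
    Summable fun j : ℕ ↦ D ^ (j + 1) * exp (-(2 ^ j / 2)) := by
  obtain ⟨m, hm⟩ := pow_unbounded_of_one_lt (2 * D) one_lt_two
  set C := D * m.factorial * 2 ^ m
  refine Summable.of_nonneg_of_le (fun j ↦ by positivity) (fun j ↦ ?_)
    (summable_geometric_two.mul_left C)
  -- `exp x ≥ x ^ m / m!` beats the geometric growth `D ^ j` once `2 ^ m > 2 D`
  have hexp : exp (-(2 ^ j / 2)) ≤ m.factorial * 2 ^ m / (2 ^ m) ^ j := by
    rw [exp_neg, ← pow_mul, mul_comm m, pow_mul]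
    calc (exp ((2 : ℝ) ^ j / 2))⁻¹ ≤ (((2 : ℝ) ^ j / 2) ^ m / m.factorial)⁻¹ :=
          inv_anti₀ (by positivity) (pow_div_factorial_le_exp (x := 2 ^ j / 2) (by positivity) m)
      _ = m.factorial * 2 ^ m / ((2 : ℝ) ^ j) ^ m := by
          rw [div_pow]; field_simp
  have hratio : D / 2 ^ m ≤ 1 / 2 := by
    rw [div_le_div_iff₀ (by positivity) two_pos]; linarith
  calc D ^ (j + 1) * exp (-(2 ^ j / 2))
      ≤ D ^ (j + 1) * (m.factorial * 2 ^ m / (2 ^ m) ^ j) := by gcongr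
    _ = C * (D / 2 ^ m) ^ j := by rw [div_pow]; ring
    _ ≤ C * (1 / 2) ^ j := by gcongr

noncomputable def dyadicPoint (k : ℕ) : ℝ := 1 - (2 ^ k)⁻¹

lemma dyadicPoint_one : dyadicPoint 1 = 1 / 2 := by norm_num [dyadicPoint]

lemma dyadicPoint_le_one (k : ℕ) : dyadicPoint k ≤ 1 :=
  sub_le_self 1 (inv_nonneg.2 (by positivity))

lemma dyadicPoint_nonneg (k : ℕ) : 0 ≤ dyadicPoint k :=
  sub_nonneg.2 (inv_le_one_of_one_le₀ (one_le_pow₀ one_le_two))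

lemma monotone_dyadicPoint : Monotone dyadicPoint :=
  fun _ _ hij ↦ sub_le_sub_left (inv_anti₀ (by positivity) (pow_le_pow_right₀ one_le_two hij)) 1

lemma dyadicPoint_succ_pow_le {n K k : ℕ} (hkK : k ≤ K) (hKn : 2 ^ K ≤ n) :
    dyadicPoint (k + 1) ^ n ≤ exp (-(2 ^ (K - k) / 2)) := by
  set h : ℝ := ((2 : ℝ) ^ (k + 1))⁻¹
  have hnh : 2 ^ (K - k) / 2 ≤ n * h := by
    have h2K : (2 : ℝ) ^ K = 2 ^ (K - k) * 2 ^ k := by rw [← pow_add, Nat.sub_add_cancel hkK]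
    calc (2 : ℝ) ^ (K - k) / 2 = 2 ^ K * h := by rw [h2K]; simp only [h, pow_succ]; field_simp
      _ ≤ n * h := by gcongr; exact_mod_cast hKn
  calc dyadicPoint (k + 1) ^ n ≤ exp (-h) ^ n :=
        pow_le_pow_left₀ (dyadicPoint_nonneg _)
          (show 1 - h ≤ exp (-h) by linarith [add_one_le_exp (-h)]) n
    _ = exp (-(n * h)) := by rw [← exp_nat_mul]; ring_nf
    _ ≤ exp (-(2 ^ (K - k) / 2)) := exp_le_exp.2 (by linarith)

section PowIntegral

variable {μ : Measure ℝ} [IsFiniteMeasure μ] {a b : ℝ}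

lemma integrableOn_Ico_pow (n : ℕ) : IntegrableOn (fun t : ℝ ↦ t ^ n) (Ico a b) μ :=
  (continuous_pow n).integrableOn_Icc.mono_set Ico_subset_Icc_self

lemma setIntegral_Ico_pow_le (ha : 0 ≤ a) (n : ℕ) :
    ∫ t in Ico a b, t ^ n ∂μ ≤ b ^ n * μ.real (Ico a b) := by
  calc ∫ t in Ico a b, t ^ n ∂μ ≤ ∫ _ in Ico a b, b ^ n ∂μ :=
        setIntegral_mono_on (integrableOn_Ico_pow n)
          (integrableOn_const (measure_ne_top μ _)) measurableSet_Ico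
          fun t ht ↦ pow_le_pow_left₀ (ha.trans ht.1) ht.2.le n
    _ = b ^ n * μ.real (Ico a b) := by rw [setIntegral_const, smul_eq_mul, mul_comm]

lemma le_setIntegral_Ico_pow (ha : 0 ≤ a) (n : ℕ) :
    a ^ n * μ.real (Ico a b) ≤ ∫ t in Ico a b, t ^ n ∂μ :=
  setIntegral_ge_of_const_le_real measurableSet_Ico (measure_ne_top μ _)
    (fun _ ht ↦ pow_le_pow_left₀ ha ht.1 n) (integrableOn_Ico_pow n)

end PowIntegral

lemma setIntegral_Ico_eq_sum_add {μ : Measure ℝ} {f : ℝ → ℝ} {x : ℕ → ℝ} (hx : Monotone x)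
    {a b : ℕ} (hab : a ≤ b) {c : ℝ} (hbc : x b ≤ c) (hf : IntegrableOn f (Ico (x a) c) μ) :
    ∫ t in Ico (x a) c, f t ∂μ =
      ∑ k ∈ Finset.Ico a b, ∫ t in Ico (x k) (x (k + 1)), f t ∂μ +
        ∫ t in Ico (x b) c, f t ∂μ := by
  induction b, hab using Nat.le_induction with
  | base => simp
  | succ b hab ih =>
    have hb : x b ≤ c := (hx b.le_succ).trans hbc
    have hsub : Ico (x b) c ⊆ Ico (x a) c := Ico_subset_Ico_left (hx hab)
    rw [ih hb, Finset.sum_Ico_succ_top hab, add_assoc,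
      ← setIntegral_union Ico_disjoint_Ico_same measurableSet_Ico
        ((hf.mono_set hsub).mono_set (Ico_subset_Ico_right hbc))
        ((hf.mono_set hsub).mono_set (Ico_subset_Ico_left (hx b.le_succ))),
      Ico_union_Ico_eq_Ico (hx b.le_succ) hbc]

namespace IsDoublingWeight

variable {q : ℝ → ℝ} {D : ℝ}

lemma monotoneOn (hq : IsDoublingWeight q D) : MonotoneOn q (Ici 1) := hq.2.1

lemma apply_one (hq : IsDoublingWeight q D) : q 1 = 1 := hq.2.2.2.1

lemma pos (hq : IsDoublingWeight q D) {x : ℝ} (hx : 1 ≤ x) : 0 < q x := hq.2.2.1 x hx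

lemma apply_two_mul_le (hq : IsDoublingWeight q D) {x : ℝ} (hx : 1 ≤ x) :
    q (2 * x) ≤ D * q x :=
  hq.2.2.2.2.2 x hx

lemma one_le_apply (hq : IsDoublingWeight q D) {x : ℝ} (hx : 1 ≤ x) : 1 ≤ q x :=
  hq.apply_one ▸ hq.monotoneOn self_mem_Ici hx hx

lemma one_le_const (hq : IsDoublingWeight q D) : 1 ≤ D := by
  have h := hq.apply_two_mul_le le_rfl
  rw [mul_one, hq.apply_one, mul_one] at h
  linarith [hq.one_le_apply (x := 2) one_le_two]

lemma apply_two_pow_mul_le (hq : IsDoublingWeight q D) (j : ℕ) {x : ℝ} (hx : 1 ≤ x) :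
    q (2 ^ j * x) ≤ D ^ j * q x := by
  induction j with
  | zero => simp
  | succ j ih =>
    have hjx : 1 ≤ 2 ^ j * x := one_le_mul_of_one_le_of_one_le (one_le_pow₀ one_le_two) hx
    calc q (2 ^ (j + 1) * x) = q (2 * (2 ^ j * x)) := by ring_nf
      _ ≤ D * q (2 ^ j * x) := hq.apply_two_mul_le hjx
      _ ≤ D * (D ^ j * q x) := by gcongr; linarith [hq.one_le_const]
      _ = D ^ (j + 1) * q x := by ring

lemma apply_le_pow_mul_apply (hq : IsDoublingWeight q D) {j : ℕ} {x y : ℝ} (hx : 1 ≤ x)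
    (hy : 1 ≤ y) (hxy : x ≤ 2 ^ j * y) : q x ≤ D ^ j * q y :=
  (hq.monotoneOn hx (one_le_mul_of_one_le_of_one_le (one_le_pow₀ one_le_two) hy) hxy).trans
    (hq.apply_two_pow_mul_le j hy)

end IsDoublingWeight

namespace IsRegularizationMeasure

variable {q : ℝ → ℝ} {D : ℝ} {μ : Measure ℝ}

lemma isFiniteMeasure (hμ : IsRegularizationMeasure q μ) : IsFiniteMeasure μ := by
  refine ⟨?_⟩
  rw [← measure_add_measure_compl (measurableSet_Ico (a := (1 / 2 : ℝ)) (b := 1)), hμ.2.2,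
    add_zero, hμ.2.1 _ le_rfl one_half_lt_one]
  exact ENNReal.ofReal_lt_top

lemma measureReal_Ico_one_sub_inv (hq : IsDoublingWeight q D) (hμ : IsRegularizationMeasure q μ)
    {x : ℝ} (hx : 2 ≤ x) : μ.real (Ico (1 - x⁻¹) 1) = (q x)⁻¹ := by
  have hxinv : x⁻¹ ≤ 2⁻¹ := inv_anti₀ two_pos hx
  have hpos : 0 < x⁻¹ := inv_pos.2 (by linarith)
  rw [measureReal_def, hμ.2.1 _ (by linarith) (by linarith), sub_sub_cancel, one_div, one_div,
    inv_inv, ENNReal.toReal_ofReal (inv_nonneg.2 (hq.pos (by linarith)).le)]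

lemma measureReal_Ico_dyadicPoint (hq : IsDoublingWeight q D)
    (hμ : IsRegularizationMeasure q μ) {k : ℕ} (hk : 1 ≤ k) :
    μ.real (Ico (dyadicPoint k) 1) = (q (2 ^ k))⁻¹ :=
  hμ.measureReal_Ico_one_sub_inv hq (le_self_pow₀ one_le_two (by omega))

lemma inv_le_setIntegral_pow (hq : IsDoublingWeight q D) (hμ : IsRegularizationMeasure q μ)
    {n : ℕ} (hn : 1 ≤ n) : (2 * D * q n)⁻¹ ≤ ∫ t in Ico (1 / 2) 1, t ^ n ∂μ := by
  have := hμ.isFiniteMeasure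
  have hn' : (1 : ℝ) ≤ n := Nat.one_le_cast.2 hn
  set a : ℝ := 1 - (2 * (n : ℝ))⁻¹
  have hinv : (2 * (n : ℝ))⁻¹ ≤ 2⁻¹ := inv_anti₀ two_pos (by linarith)
  have ha : 1 / 2 ≤ a := by linarith
  have hbernoulli : 1 / 2 ≤ a ^ n :=
    calc (1 / 2 : ℝ) = 1 + n * -(2 * (n : ℝ))⁻¹ := by field_simp; ring
      _ ≤ (1 + -(2 * (n : ℝ))⁻¹) ^ n := one_add_mul_le_pow (by linarith) n
      _ = a ^ n := by rw [← sub_eq_add_neg]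
  calc (2 * D * q n)⁻¹ ≤ 1 / 2 * (q (2 * n))⁻¹ := by
        rw [one_div, ← mul_inv, mul_assoc]
        exact inv_anti₀ (by positivity [hq.pos (by linarith : (1 : ℝ) ≤ 2 * n)])
          (by gcongr; exact hq.apply_two_mul_le hn')
    _ = 1 / 2 * μ.real (Ico a 1) := by rw [hμ.measureReal_Ico_one_sub_inv hq (by linarith)]
    _ ≤ a ^ n * μ.real (Ico a 1) := by gcongr
    _ ≤ ∫ t in Ico a 1, t ^ n ∂μ := le_setIntegral_Ico_pow (by linarith) n
    _ ≤ ∫ t in Ico (1 / 2) 1, t ^ n ∂μ :=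
        setIntegral_mono_set (integrableOn_Ico_pow n)
          ((ae_restrict_iff' measurableSet_Ico).2 (ae_of_all _ fun t ht ↦
            pow_nonneg (by linarith [ht.1]) n))
          (Ico_subset_Ico_left ha).eventuallyLE

lemma setIntegral_Ico_dyadicPoint_le (hq : IsDoublingWeight q D)
    (hμ : IsRegularizationMeasure q μ) {n K k : ℕ} (hk : 1 ≤ k) (hkK : k ≤ K)
    (hKn : 2 ^ K ≤ n) (hnK : n ≤ 2 ^ (K + 1)) :
    ∫ t in Ico (dyadicPoint k) (dyadicPoint (k + 1)), t ^ n ∂μ ≤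
      D ^ (K - k + 1) * exp (-(2 ^ (K - k) / 2)) / q n := by
  have := hμ.isFiniteMeasure
  have hn : (1 : ℝ) ≤ n := by exact_mod_cast Nat.one_le_two_pow.trans hKn
  have hmass : μ.real (Ico (dyadicPoint k) (dyadicPoint (k + 1))) ≤ (q (2 ^ k))⁻¹ := by
    rw [← hμ.measureReal_Ico_dyadicPoint hq hk]
    exact measureReal_mono (Ico_subset_Ico_right (dyadicPoint_le_one _))
  have hdoubling : (q (2 ^ k))⁻¹ ≤ D ^ (K - k + 1) / q n := by
    have hqn : q n ≤ D ^ (K - k + 1) * q (2 ^ k) := by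
      refine hq.apply_le_pow_mul_apply hn (one_le_pow₀ one_le_two) ?_
      rw [← pow_add, show K - k + 1 + k = K + 1 by omega]
      exact_mod_cast hnK
    rw [le_div_iff₀ (hq.pos hn), inv_mul_le_iff₀ (hq.pos (one_le_pow₀ one_le_two)), mul_comm]
    exact hqn
  calc ∫ t in Ico (dyadicPoint k) (dyadicPoint (k + 1)), t ^ n ∂μ
      ≤ dyadicPoint (k + 1) ^ n * μ.real (Ico (dyadicPoint k) (dyadicPoint (k + 1))) :=
        setIntegral_Ico_pow_le (dyadicPoint_nonneg k) n
    _ ≤ exp (-(2 ^ (K - k) / 2)) * (D ^ (K - k + 1) / q n) :=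
        mul_le_mul (dyadicPoint_succ_pow_le hkK hKn) (hmass.trans hdoubling) measureReal_nonneg
          (exp_pos _).le
    _ = D ^ (K - k + 1) * exp (-(2 ^ (K - k) / 2)) / q n := by ring

lemma setIntegral_Ico_dyadicPoint_one_le (hq : IsDoublingWeight q D)
    (hμ : IsRegularizationMeasure q μ) {n K : ℕ} (hn : 1 ≤ n) (hnK : n ≤ 2 ^ (K + 1)) :
    ∫ t in Ico (dyadicPoint (K + 1)) 1, t ^ n ∂μ ≤ (q n)⁻¹ := by
  have := hμ.isFiniteMeasure
  have hn' : (1 : ℝ) ≤ n := Nat.one_le_cast.2 hn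
  calc ∫ t in Ico (dyadicPoint (K + 1)) 1, t ^ n ∂μ
      ≤ 1 ^ n * μ.real (Ico (dyadicPoint (K + 1)) 1) :=
        setIntegral_Ico_pow_le (dyadicPoint_nonneg _) n
    _ = (q (2 ^ (K + 1)))⁻¹ := by
        rw [one_pow, one_mul, hμ.measureReal_Ico_dyadicPoint hq (Nat.le_add_left 1 K)]
    _ ≤ (q n)⁻¹ :=
        inv_anti₀ (hq.pos hn') (hq.monotoneOn hn' (one_le_pow₀ one_le_two : (1 : ℝ) ≤ _)
          (by exact_mod_cast hnK))

lemma setIntegral_pow_le (hq : IsDoublingWeight q D) (hμ : IsRegularizationMeasure q μ)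
    {n : ℕ} (hn : 1 ≤ n) :
    ∫ t in Ico (1 / 2) 1, t ^ n ∂μ ≤
      (∑' j : ℕ, D ^ (j + 1) * exp (-(2 ^ j / 2)) + 1) / q n := by
  have := hμ.isFiniteMeasure
  set g : ℕ → ℝ := fun j ↦ D ^ (j + 1) * exp (-(2 ^ j / 2))
  have hD : 0 ≤ D := zero_le_one.trans hq.one_le_const
  set K := Nat.log 2 n
  have hKn : 2 ^ K ≤ n := Nat.pow_log_le_self 2 (by omega)
  have hnK : n ≤ 2 ^ (K + 1) := (Nat.lt_pow_succ_log_self one_lt_two n).le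
  have hsum : ∑ k ∈ Finset.Ico 1 (K + 1), g (K - k) ≤ ∑' j, g j := by
    rw [Finset.sum_Ico_reflect _ _ le_rfl]
    exact (summable_pow_mul_exp_neg_two_pow hD).sum_le_tsum _ fun j _ ↦ by positivity
  calc ∫ t in Ico (1 / 2) 1, t ^ n ∂μ
      = ∑ k ∈ Finset.Ico 1 (K + 1), ∫ t in Ico (dyadicPoint k) (dyadicPoint (k + 1)), t ^ n ∂μ +
          ∫ t in Ico (dyadicPoint (K + 1)) 1, t ^ n ∂μ := by
        rw [← dyadicPoint_one]
        exact setIntegral_Ico_eq_sum_add monotone_dyadicPoint (Nat.le_add_left 1 K)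
          (dyadicPoint_le_one _) (integrableOn_Ico_pow n)
    _ ≤ ∑ k ∈ Finset.Ico 1 (K + 1), g (K - k) / q n + (q n)⁻¹ := by
        gcongr with k hk
        · rw [Finset.mem_Ico] at hk
          exact hμ.setIntegral_Ico_dyadicPoint_le hq hk.1 (by omega) hKn hnK
        · exact hμ.setIntegral_Ico_dyadicPoint_one_le hq hn hnK
    _ ≤ (∑' j, g j + 1) / q n := by
        rw [← Finset.sum_div, add_div, one_div]
        gcongr
        exact (hq.pos (Nat.one_le_cast.2 hn)).le

end IsRegularizationMeasure

/-- The regularization `f(α) = (∫_{[1/2,1)} t^α dμ(t))⁻¹` of a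
doubling weight `q` is comparable to `q`: `A⁻¹ q(n) ≤ f(n) ≤ A q(n)` with `A = A(D)`. -/
theorem regularization_comparable (D : ℝ) :
    ∃ A : ℝ, 0 < A ∧ ∀ q : ℝ → ℝ, IsDoublingWeight q D →
      ∀ μ : Measure ℝ, IsRegularizationMeasure q μ →
        ∀ n : ℕ, 1 ≤ n →
          A⁻¹ * q (n : ℝ) ≤ (∫ t in Set.Ico (1/2 : ℝ) 1, t ^ (n : ℝ) ∂μ)⁻¹ ∧
          (∫ t in Set.Ico (1/2 : ℝ) 1, t ^ (n : ℝ) ∂μ)⁻¹ ≤ A * q (n : ℝ) := by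
  rcases lt_or_ge D 1 with hD | hD
  · exact ⟨1, one_pos, fun q hq ↦ absurd hq.one_le_const hD.not_ge⟩
  set S := ∑' j : ℕ, D ^ (j + 1) * exp (-(2 ^ j / 2))
  have hS : 0 ≤ S := tsum_nonneg fun j ↦ by positivity
  refine ⟨2 * D + S + 1, by positivity, fun q hq μ hμ n hn ↦ ?_⟩
  simp only [rpow_natCast]
  have hqn : 0 < q n := hq.pos (Nat.one_le_cast.2 hn)
  have hlower := hμ.inv_le_setIntegral_pow hq hn
  have hupper := hμ.setIntegral_pow_le hq hn
  have hI : 0 < ∫ t in Ico (1 / 2) 1, t ^ n ∂μ := (by positivity : (0 : ℝ) < _).trans_le hlower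
  constructor
  · calc (2 * D + S + 1)⁻¹ * q n = ((2 * D + S + 1) / q n)⁻¹ := by rw [inv_div, div_eq_inv_mul]
      _ ≤ (∫ t in Ico (1 / 2) 1, t ^ n ∂μ)⁻¹ := inv_anti₀ hI (hupper.trans (by gcongr; linarith))
  · calc (∫ t in Ico (1 / 2) 1, t ^ n ∂μ)⁻¹ ≤ 2 * D * q n := by
          simpa using inv_anti₀ (by positivity) hlower
      _ ≤ (2 * D + S + 1) * q n := by gcongr; linarith
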